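/- Let α > 0, β < 0, set γ = β/(1+α²)^{5/2}, and let Z > 0. Suppose y ∈ C²([0,Z]) satisfies y''(x) = γ (1 + G⁻¹(y(x))²)^{5/4} for x ∈ (0,Z), with y(0) = G(α), y'(0) = 0, y(x) > 0 for x ∈ [0,Z), and y(Z) = 0, where y takes values in (−c₀/2, c₀/2). Then Z = (1+α²)^{5/4}/(√2 · √|β|) · ∫₀^α (α−t)^{-1/2} (1+t²)^{-5/4} dt. -/

import Mathlib

/-!
Put `u = G⁻¹ ∘ y`, so that `u 0 = α`, `u Z = 0` and `u' = (1 + u²)^{5/4} y'`. The equation says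
`y'' = γ (G⁻¹)'(y)`, hence the energy `y'²/2 - γ u` is conserved and `y'² = 2|γ| (α - u)`.
Since `y'' < 0`, `y' < 0` on `(0, Z]`, so `u` solves the separable equation
`(α - u)^{-1/2} (1 + u²)^{-5/4} u' = -√(2|γ|)`. Integrating from `0` to `Z` gives
`∫₀^α (α - t)^{-1/2} (1 + t²)^{-5/4} dt = √(2|γ|) Z`, and `√(2|γ|) (1 + α²)^{5/4} = √2 √|β|`.
-/

open Real MeasureTheory

noncomputable def G (x : ℝ) : ℝ := ∫ t in (0:ℝ)..x, (1 + t ^ 2) ^ (-(5:ℝ)/4)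

noncomputable def c₀ : ℝ := ∫ t : ℝ, (1 + t ^ 2) ^ (-(5:ℝ)/4)

noncomputable def Ginv : ℝ → ℝ := Function.invFun G

open Set Filter Topology Function

theorem StrictMono.monotoneOn_invFun {α β : Type*} [LinearOrder α] [Nonempty α] [LinearOrder β]
    {f : α → β} (hf : StrictMono f) : MonotoneOn (invFun f) (range f) := by
  rintro _ ⟨a, rfl⟩ _ ⟨b, rfl⟩ hab
  rw [leftInverse_invFun hf.injective a, leftInverse_invFun hf.injective b]
  exact hf.le_iff_le.1 hab

theorem StrictMono.continuousAt_invFun {α β : Type*} [LinearOrder α] [TopologicalSpace α]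
    [OrderTopology α] [DenselyOrdered α] [Nonempty α] [LinearOrder β] [TopologicalSpace β]
    [OrderTopology β] {f : α → β} (hf : StrictMono f) {v : β} (hv : range f ∈ 𝓝 v) :
    ContinuousAt (invFun f) v := by
  refine continuousAt_of_monotoneOn_of_image_mem_nhds hf.monotoneOn_invFun hv ?_
  rw [← range_comp, (leftInverse_invFun hf.injective).comp_eq_id, range_id]
  exact univ_mem

theorem StrictMono.hasDerivAt_invFun {f : ℝ → ℝ} (hf : StrictMono f) {f' v : ℝ}
    (hd : HasDerivAt f f' (invFun f v)) (hf' : f' ≠ 0) (hv : range f ∈ 𝓝 v) :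
    HasDerivAt (invFun f) f'⁻¹ v :=
  hd.of_local_left_inverse (hf.continuousAt_invFun hv) hf'
    (mem_of_superset hv fun _ hw => invFun_eq hw)

theorem continuous_one_add_sq_rpow (r : ℝ) : Continuous fun t : ℝ => (1 + t ^ 2) ^ r :=
  (by fun_prop : Continuous fun t : ℝ => 1 + t ^ 2).rpow_const fun t => Or.inl (by positivity)

theorem sub_rpow_neg_half_mul_one_add_sq_rpow_mul {a s : ℝ} (hs : s < a) (c : ℝ) :
    (a - s) ^ (-(1:ℝ)/2) * (1 + s ^ 2) ^ (-(5:ℝ)/4) * ((1 + s ^ 2) ^ ((5:ℝ)/4) * -(c * √(a - s)))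
      = -c := by
  have h₁ : (1 + s ^ 2) ^ (-(5:ℝ)/4) * (1 + s ^ 2) ^ ((5:ℝ)/4) = 1 := by
    rw [← rpow_add (by positivity)]
    norm_num
  have h₂ : (a - s) ^ (-(1:ℝ)/2) * √(a - s) = 1 := by
    rw [sqrt_eq_rpow, ← rpow_add (sub_pos.2 hs)]
    norm_num
  linear_combination (-c * (1 + s ^ 2) ^ (-(5:ℝ)/4) * (1 + s ^ 2) ^ ((5:ℝ)/4)) * h₂ - c * h₁

theorem G_hasDerivAt (x : ℝ) : HasDerivAt G ((1 + x ^ 2) ^ (-(5:ℝ)/4)) x :=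
  ((continuous_one_add_sq_rpow _).integral_hasStrictDerivAt 0 x).hasDerivAt

theorem G_strictMono : StrictMono G :=
  strictMono_of_deriv_pos fun x => by rw [(G_hasDerivAt x).deriv]; positivity

theorem G_continuous : Continuous G :=
  continuous_iff_continuousAt.2 fun x => (G_hasDerivAt x).continuousAt

theorem G_zero : G 0 = 0 := intervalIntegral.integral_same

theorem G_neg (x : ℝ) : G (-x) = -G x := by
  have h := intervalIntegral.integral_comp_neg (a := 0) (b := x)
    fun t : ℝ => (1 + t ^ 2) ^ (-(5:ℝ)/4)
  simp only [even_two.neg_pow, neg_zero] at h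
  rw [G, G, intervalIntegral.integral_symm (-x), ← h]

theorem tendsto_G_atTop : Tendsto G atTop (𝓝 (c₀ / 2)) := by
  have hint : Integrable fun t : ℝ => (1 + t ^ 2) ^ (-(5:ℝ)/4) := by
    convert integrable_rpow_neg_one_add_norm_sq (E := ℝ) (μ := volume) (r := 5/2) (by simp; norm_num)
      using 3 <;> norm_num
  have hc₀ : c₀ = 2 * ∫ t in Ioi (0:ℝ), (1 + t ^ 2) ^ (-(5:ℝ)/4) := by
    rw [← integral_comp_abs]
    simp only [sq_abs, c₀]
  rw [hc₀, mul_div_cancel_left₀ _ two_ne_zero]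
  exact intervalIntegral_tendsto_integral_Ioi 0 hint.integrableOn tendsto_id

theorem tendsto_G_atBot : Tendsto G atBot (𝓝 (-(c₀ / 2))) := by
  simpa [G_neg] using (tendsto_G_atTop.comp tendsto_neg_atBot_atTop).neg

theorem range_G : range G = Ioo (-(c₀ / 2)) (c₀ / 2) := by
  refine Subset.antisymm ?_ fun v hv => ?_
  · rintro _ ⟨x, rfl⟩
    exact ⟨(G_strictMono.monotone.le_of_tendsto tendsto_G_atBot (x - 1)).trans_lt
        (G_strictMono (sub_one_lt x)),
      (G_strictMono (lt_add_one x)).trans_le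
        (G_strictMono.monotone.ge_of_tendsto tendsto_G_atTop (x + 1))⟩
  · exact mem_range_of_exists_le_of_exists_ge G_continuous
      ((tendsto_G_atBot.eventually_lt_const hv.1).exists.imp fun _ => le_of_lt)
      ((tendsto_G_atTop.eventually_const_lt hv.2).exists.imp fun _ => le_of_lt)

theorem Ginv_G (x : ℝ) : Ginv (G x) = x :=
  leftInverse_invFun G_strictMono.injective x

theorem Ginv_nonneg {v : ℝ} (hv : v ∈ Ioo (-(c₀ / 2)) (c₀ / 2)) (h : 0 ≤ v) : 0 ≤ Ginv v := by
  have h' : Ginv 0 ≤ Ginv v := G_strictMono.monotoneOn_invFun ⟨0, G_zero⟩ (range_G ▸ hv) h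
  rwa [← G_zero, Ginv_G] at h'

theorem Ginv_hasDerivAt {v : ℝ} (hv : v ∈ Ioo (-(c₀ / 2)) (c₀ / 2)) :
    HasDerivAt Ginv ((1 + Ginv v ^ 2) ^ ((5:ℝ)/4)) v := by
  have h := G_strictMono.hasDerivAt_invFun (G_hasDerivAt (Ginv v)) (by positivity)
    (range_G ▸ isOpen_Ioo.mem_nhds hv)
  rwa [neg_div, rpow_neg (by positivity), inv_inv] at h

theorem ContDiff.hasDerivAt_deriv {y : ℝ → ℝ} (hy : ContDiff ℝ 2 y) (x : ℝ) :
    HasDerivAt (deriv y) (iteratedDeriv 2 y x) x := by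
  rw [iteratedDeriv_succ, iteratedDeriv_one]
  exact ((iteratedDeriv_one (f := y) ▸ hy.differentiable_iteratedDeriv 1 (by norm_num)) x).hasDerivAt

theorem eq_of_hasDerivAt_zero {f : ℝ → ℝ} {a b : ℝ} (hab : a ≤ b) (hf : ContinuousOn f (Icc a b))
    (hf' : ∀ x ∈ Ioo a b, HasDerivAt f 0 x) : f b = f a := by
  rcases hab.eq_or_lt with rfl | hlt
  · rfl
  obtain ⟨c, -, hc⟩ := exists_hasDerivAt_eq_slope f (fun _ => 0) hlt hf hf'
  rw [eq_div_iff (sub_ne_zero.2 hlt.ne')] at hc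
  linarith

theorem energy_conservation {y P p : ℝ → ℝ} {γ a b : ℝ} (hy : ContDiff ℝ 2 y)
    (hP : ∀ x ∈ Icc a b, HasDerivAt P (p (y x)) (y x))
    (hode : ∀ x ∈ Ioo a b, iteratedDeriv 2 y x = γ * p (y x)) {x : ℝ} (hx : x ∈ Icc a b) :
    deriv y x ^ 2 / 2 - γ * P (y x) = deriv y a ^ 2 / 2 - γ * P (y a) := by
  have hE : ∀ z ∈ Icc a b, HasDerivAt (fun z => deriv y z ^ 2 / 2 - γ * P (y z))
      (deriv y z * iteratedDeriv 2 y z - γ * (p (y z) * deriv y z)) z := fun z hz =>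
    ((((hy.hasDerivAt_deriv z).pow 2).div_const 2).sub
      (((hP z hz).comp z (hy.differentiable (by norm_num) z).hasDerivAt).const_mul γ)).congr_deriv
      (by push_cast; ring)
  refine eq_of_hasDerivAt_zero hx.1 (fun z hz => (hE z ⟨hz.1, hz.2.trans hx.2⟩).continuousAt
    |>.continuousWithinAt) fun z hz => ?_
  have hz' : z ∈ Ioo a b := ⟨hz.1, hz.2.trans_le hx.2⟩
  simpa [hode z hz', mul_comm, mul_left_comm] using hE z (Ioo_subset_Icc_self hz')

theorem deriv_neg_of_iteratedDeriv_two_neg {y : ℝ → ℝ} {a b : ℝ} (hy : ContDiff ℝ 2 y)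
    (h₀ : deriv y a = 0) (h : ∀ x ∈ Ioo a b, iteratedDeriv 2 y x < 0) {x : ℝ} (hx : x ∈ Ioc a b) :
    deriv y x < 0 := by
  have hanti : StrictAntiOn (deriv y) (Icc a b) :=
    strictAntiOn_of_deriv_neg (convex_Icc a b) (hy.continuous_deriv (by norm_num)).continuousOn
      fun z hz => by
        rw [interior_Icc] at hz
        rw [(hy.hasDerivAt_deriv z).deriv]
        exact h z hz
  simpa [h₀] using hanti (left_mem_Icc.2 (hx.1.le.trans hx.2)) (Ioc_subset_Icc_self hx) hx.1

theorem intervalIntegrable_sub_rpow_neg_half_mul {g : ℝ → ℝ} (hg : Continuous g) (α a b : ℝ) :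
    IntervalIntegrable (fun t => (α - t) ^ (-(1:ℝ)/2) * g t) volume a b := by
  refine IntervalIntegrable.mul_continuousOn ?_ hg.continuousOn
  simpa using (intervalIntegral.intervalIntegrable_rpow' (a := α - a) (b := α - b)
    (r := -(1:ℝ)/2) (by norm_num)).comp_sub_left α

theorem continuousAt_sub_rpow_neg_half_mul {g : ℝ → ℝ} (hg : Continuous g) {α s : ℝ} (hs : s < α) :
    ContinuousAt (fun t => (α - t) ^ (-(1:ℝ)/2) * g t) s :=
  ((continuousAt_const.sub continuousAt_id).rpow_const
    (Or.inl (sub_ne_zero.2 hs.ne'))).mul hg.continuousAt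

/-- Separation of variables: `Φ ∘ u + c • id` is constant for the primitive `Φ` of `ρ`. -/
theorem integral_eq_mul_of_mul_deriv_eq_neg {ρ u u' : ℝ → ℝ} {a b c Z : ℝ} (hZ : 0 ≤ Z)
    (hρ : IntervalIntegrable ρ volume a b) (hρc : ∀ s ∈ Iio b, ContinuousAt ρ s)
    (hu : ContinuousOn u (Icc 0 Z)) (hmaps : ∀ x ∈ Icc 0 Z, u x ∈ Icc a b)
    (hlt : ∀ x ∈ Ioo 0 Z, u x < b) (hu' : ∀ x ∈ Ioo 0 Z, HasDerivAt u (u' x) x)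
    (hsep : ∀ x ∈ Ioo 0 Z, ρ (u x) * u' x = -c) :
    ∫ t in u Z..u 0, ρ t = c * Z := by
  have hab : a ≤ b := (hmaps 0 (left_mem_Icc.2 hZ)).1.trans (hmaps 0 (left_mem_Icc.2 hZ)).2
  have hρ' : ∀ s ∈ Icc a b, IntervalIntegrable ρ volume a s := fun s hs =>
    hρ.mono_set (by rw [uIcc_of_le hab, uIcc_of_le hs.1]; exact Icc_subset_Icc_right hs.2)
  set Φ : ℝ → ℝ := fun s => ∫ t in a..s, ρ t
  have hΦc : ContinuousOn Φ (Icc a b) := by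
    simpa [uIcc_of_le hab] using intervalIntegral.continuousOn_primitive_interval' hρ left_mem_uIcc
  have hΦ' : ∀ s ∈ Ico a b, HasDerivAt Φ (ρ s) s := fun s hs =>
    intervalIntegral.integral_hasDerivAt_right (hρ' s (Ico_subset_Icc_self hs))
      (ContinuousAt.stronglyMeasurableAtFilter isOpen_Iio hρc s hs.2) (hρc s hs.2)
  have hconst := eq_of_hasDerivAt_zero hZ (f := fun x => Φ (u x) + c * x)
    ((hΦc.comp hu hmaps).add (continuousOn_const.mul continuousOn_id)) fun x hx =>
      (((hΦ' (u x) ⟨(hmaps x (Ioo_subset_Icc_self hx)).1, hlt x hx⟩).comp x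
        (hu' x hx)).add ((hasDerivAt_id x).const_mul c)).congr_deriv (by rw [hsep x hx]; ring)
  rw [← intervalIntegral.integral_interval_sub_left (hρ' _ (hmaps 0 (left_mem_Icc.2 hZ)))
    (hρ' _ (hmaps Z (right_mem_Icc.2 hZ)))]
  simp only [mul_zero, add_zero] at hconst
  linarith

theorem deriv_sq_eq_of_ode {α γ Z : ℝ} {y : ℝ → ℝ} (hy : ContDiff ℝ 2 y)
    (hrange : ∀ x ∈ Icc 0 Z, y x ∈ Ioo (-(c₀ / 2)) (c₀ / 2))
    (hode : ∀ x ∈ Ioo 0 Z, iteratedDeriv 2 y x = γ * (1 + Ginv (y x) ^ 2) ^ ((5:ℝ)/4))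
    (hy0 : y 0 = G α) (hy'0 : deriv y 0 = 0) {x : ℝ} (hx : x ∈ Icc 0 Z) :
    deriv y x ^ 2 = 2 * -γ * (α - Ginv (y x)) := by
  have h := energy_conservation (p := fun v => (1 + Ginv v ^ 2) ^ ((5:ℝ)/4)) hy
    (fun z hz => Ginv_hasDerivAt (hrange z hz)) hode hx
  rw [hy'0, hy0, Ginv_G] at h
  linarith

theorem sqrt_two_mul_neg_div_mul_rpow {α β : ℝ} (hβ : β < 0) :
    √(2 * -(β / (1 + α ^ 2) ^ ((5:ℝ)/2))) * (1 + α ^ 2) ^ ((5:ℝ)/4) = √2 * √|β| := by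
  have hP : √((1 + α ^ 2) ^ ((5:ℝ)/2)) = (1 + α ^ 2) ^ ((5:ℝ)/4) := by
    rw [sqrt_eq_rpow, ← rpow_mul (by positivity)]
    norm_num
  have hpos : 0 ≤ 2 * -(β / (1 + α ^ 2) ^ ((5:ℝ)/2)) := by
    have : β / (1 + α ^ 2) ^ ((5:ℝ)/2) < 0 := div_neg_of_neg_of_pos hβ (by positivity)
    linarith
  rw [← hP, ← sqrt_mul hpos, ← sqrt_mul zero_le_two, abs_of_neg hβ]
  congr 1
  field_simp

theorem stmt_8 (α β γ Z : ℝ) (hβ : β < 0)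
    (hγ : γ = β / (1 + α ^ 2) ^ ((5:ℝ)/2)) (hZ : 0 < Z)
    (y : ℝ → ℝ) (hy : ContDiff ℝ 2 y)
    (hrange : ∀ x ∈ Set.Icc 0 Z, y x ∈ Set.Ioo (-(c₀ / 2)) (c₀ / 2))
    (hode : ∀ x ∈ Set.Ioo 0 Z, iteratedDeriv 2 y x = γ * (1 + Ginv (y x) ^ 2) ^ ((5:ℝ)/4))
    (hy0 : y 0 = G α) (hy'0 : deriv y 0 = 0)
    (hpos : ∀ x ∈ Set.Ico 0 Z, 0 < y x) (hyZ : y Z = 0) :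
    Z = (1 + α ^ 2) ^ ((5:ℝ)/4) / (Real.sqrt 2 * Real.sqrt |β|) *
        ∫ t in (0:ℝ)..α, (α - t) ^ (-(1:ℝ)/2) * (1 + t ^ 2) ^ (-(5:ℝ)/4) := by
  have hγ0 : γ < 0 := hγ ▸ div_neg_of_neg_of_pos hβ (by positivity)
  set u : ℝ → ℝ := fun x => Ginv (y x)
  have hu0 : u 0 = α := by simp only [u, hy0, Ginv_G]
  have huZ : u Z = 0 := by simpa [u, hyZ, G_zero] using Ginv_G 0
  have hu' : ∀ x ∈ Icc 0 Z, HasDerivAt u ((1 + u x ^ 2) ^ ((5:ℝ)/4) * deriv y x) x := fun x hx =>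
    (Ginv_hasDerivAt (hrange x hx)).comp x (hy.differentiable (by norm_num) x).hasDerivAt
  have henergy : ∀ x ∈ Icc 0 Z, deriv y x ^ 2 = 2 * -γ * (α - u x) := fun x hx =>
    deriv_sq_eq_of_ode hy hrange hode hy0 hy'0 hx
  have hy'neg : ∀ x ∈ Ioc 0 Z, deriv y x < 0 := fun x hx =>
    deriv_neg_of_iteratedDeriv_two_neg hy hy'0
      (fun z hz => hode z hz ▸ mul_neg_of_neg_of_pos hγ0 (by positivity)) hx
  have hy' : ∀ x ∈ Ioc 0 Z, deriv y x = -(√(2 * -γ) * √(α - u x)) := fun x hx => by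
    rw [← sqrt_mul (by linarith), ← henergy x (Ioc_subset_Icc_self hx), sqrt_sq_eq_abs,
      abs_of_neg (hy'neg x hx), neg_neg]
  have hu_lt : ∀ x ∈ Ioc 0 Z, u x < α := fun x hx => by
    nlinarith [henergy x (Ioc_subset_Icc_self hx), hy'neg x hx]
  have hu_mem : ∀ x ∈ Icc 0 Z, u x ∈ Icc 0 α := fun x hx => by
    refine ⟨?_, by nlinarith [henergy x hx, sq_nonneg (deriv y x)]⟩
    rcases hx.2.eq_or_lt with rfl | hxZ
    · exact huZ.ge
    · exact Ginv_nonneg (hrange x hx) (hpos x ⟨hx.1, hxZ⟩).le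
  have htime := integral_eq_mul_of_mul_deriv_eq_neg hZ.le
    (intervalIntegrable_sub_rpow_neg_half_mul (continuous_one_add_sq_rpow (-(5:ℝ)/4)) α 0 α)
    (fun s hs => continuousAt_sub_rpow_neg_half_mul (continuous_one_add_sq_rpow _) hs)
    (fun x hx => (hu' x hx).continuousAt.continuousWithinAt) hu_mem
    (fun x hx => hu_lt x (Ioo_subset_Ioc_self hx)) (fun x hx => hu' x (Ioo_subset_Icc_self hx))
    fun x hx => by
      rw [hy' x (Ioo_subset_Ioc_self hx)]
      exact sub_rpow_neg_half_mul_one_add_sq_rpow_mul (hu_lt x (Ioo_subset_Ioc_self hx)) _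
  have hc : √(2 * -γ) ≠ 0 := (sqrt_pos.2 (by linarith)).ne'
  rw [hu0, huZ] at htime
  rw [htime, ← sqrt_two_mul_neg_div_mul_rpow hβ, ← hγ]
  generalize √(2 * -γ) = c at hc ⊢
  field_simp
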